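/- Let ξ > 0 be fixed. Then lim_{z→0⁺} e^{−ξ²/(2z)} z^{1/2} Ψ₁[1, 1/2; 3/2, 1/2; −z, ξ²/(2z)] = (π/2) · erf(ξ/√2), where erf is the error function. -/

import Mathlib

/-!
For `y ≥ 0` the integrand of `Ψ₁[1, 1/2; 3/2, 1/2; −z, y]` is elementary, since
`₁F₁[1/2; 3/2; x] = ∫₀¹ e^{x t²} dt` and `₀F₁[−; 1/2; w] = cosh (2√w)`. Put `c = ξ/√2`, so that
`y = ξ²/(2z) = c²/z`, and `G r = ∫₀^r e^{−s²} ds`. The substitution `u = r²/z` together with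
`r ∫₀¹ e^{−r²t²} dt = G r` turns `e^{−y} √z Ψ₁` into
`z^{−1/2} ∫₀^∞ G r (e^{−(r−c)²/z} + e^{−(r+c)²/z}) dr`.
As `z → 0⁺` the two Gaussians concentrate at `c` and at `−c`; the second sees only the zero
extension of `G` to `r < 0`, so the limit is `√π G c + 0 = (π/2) erf c`.
-/

open Complex MeasureTheory Filter Topology

noncomputable def poch (a : ℂ) (n : ℕ) : ℂ := (ascPochhammer ℂ n).eval a

/-- Kummer confluent hypergeometric function `₁F₁[a; c; z]`. -/
noncomputable def F11 (a c z : ℂ) : ℂ :=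
  ∑' n : ℕ, poch a n / poch c n * z ^ n / (Nat.factorial n : ℂ)

/-- Confluent hypergeometric limit function `₀F₁[−; b; z]`. -/
noncomputable def F01 (b z : ℂ) : ℂ :=
  ∑' k : ℕ, z ^ k / (poch b k * (Nat.factorial k : ℂ))

/-- The Humbert function `Ψ₁[a,b;c,c';x,y]` given by its Laplace-type integral
representation, valid for `Re a > 0` and `Re x < 1` (and providing the analytic
continuation of the double series to negative real `x`). -/
noncomputable def Psi1 (a b c c' x y : ℂ) : ℂ :=
  (Complex.Gamma a)⁻¹ *
    ∫ u in Set.Ioi (0 : ℝ), (u : ℂ) ^ (a - 1) * Complex.exp (-(u : ℂ)) *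
      F11 b c (x * u) * F01 c' (y * u)

noncomputable def erf (t : ℝ) : ℝ :=
  2 / Real.sqrt Real.pi * ∫ s in (0 : ℝ)..t, Real.exp (-s ^ 2)

open Real Set
open scoped Nat Interval

lemma poch_succ (a : ℂ) (n : ℕ) : poch a (n + 1) = poch a n * (a + n) :=
  ascPochhammer_succ_eval n a

lemma poch_add_one_mul (a : ℂ) (n : ℕ) : poch (a + 1) n * a = poch a n * (a + n) := by
  rw [← poch_succ]
  simp [poch, ascPochhammer_succ_left, mul_comm]

lemma poch_ne_zero {a : ℂ} (ha : 0 < a.re) (n : ℕ) : poch a n ≠ 0 := by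
  rw [poch, Ne, ascPochhammer_eval_eq_zero_iff]
  rintro ⟨k, -, hk⟩
  have := congrArg Complex.re hk
  simp only [natCast_re, neg_re] at this
  linarith [(k.cast_nonneg : (0 : ℝ) ≤ k)]

lemma poch_half_div_poch_three_halves (n : ℕ) :
    poch (1 / 2) n / poch (3 / 2) n = 1 / (2 * n + 1) := by
  have h := poch_add_one_mul (1 / 2) n
  have h₁ : poch (3 / 2) n ≠ 0 := poch_ne_zero (by norm_num) n
  have h₂ : (2 * n + 1 : ℂ) ≠ 0 := by exact_mod_cast (2 * n).succ_ne_zero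
  norm_num at h
  field_simp
  linear_combination -2 * h

lemma poch_half_mul_factorial_mul_four_pow (k : ℕ) :
    poch (1 / 2) k * k ! * 4 ^ k = (2 * k)! := by
  induction k with
  | zero => simp [poch]
  | succ k ih =>
    rw [poch_succ, show 2 * (k + 1) = 2 * k + 1 + 1 by ring]
    push_cast [Nat.factorial_succ] at ih ⊢
    linear_combination (4 * ((k : ℂ) + 1) * (1 / 2 + k)) * ih

lemma intervalIntegral_mul_sq_pow_div_factorial (x : ℝ) (n : ℕ) :
    ∫ t in (0:ℝ)..1, (x * t ^ 2) ^ n / n ! = x ^ n / ((2 * n + 1) * n !) := by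
  simp_rw [mul_pow, ← pow_mul]
  rw [intervalIntegral.integral_div, intervalIntegral.integral_const_mul, integral_pow]
  push_cast
  field_simp
  ring

lemma hasSum_intervalIntegral_exp_mul_sq (x : ℝ) :
    HasSum (fun n : ℕ => x ^ n / ((2 * n + 1) * n !))
      (∫ t in (0:ℝ)..1, rexp (x * t ^ 2)) := by
  simp_rw [← intervalIntegral_mul_sq_pow_div_factorial]
  refine intervalIntegral.hasSum_integral_of_dominated_convergence (fun n _ => |x| ^ n / n !)
    (fun n => (by fun_prop : Continuous fun t : ℝ => (x * t ^ 2) ^ n / n !).aestronglyMeasurable)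
    (fun n => ae_of_all _ fun t ht => ?_)
    (ae_of_all _ fun t _ => Real.summable_pow_div_factorial |x|) intervalIntegrable_const
    (ae_of_all _ fun t _ => by
      simpa [Real.exp_eq_exp_ℝ] using NormedSpace.expSeries_div_hasSum_exp (x * t ^ 2))
  rw [Set.uIoc_of_le zero_le_one] at ht
  have ht' : |t| ^ 2 ≤ 1 := by rw [abs_of_pos ht.1]; nlinarith [ht.1, ht.2]
  rw [norm_div, norm_pow, norm_mul, norm_pow, Real.norm_natCast, Real.norm_eq_abs,
    Real.norm_eq_abs]
  gcongr
  exact mul_le_of_le_one_right (abs_nonneg x) ht'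

lemma F11_half_three_halves (x : ℝ) :
    F11 (1 / 2) (3 / 2) x = ((∫ t in (0:ℝ)..1, rexp (x * t ^ 2) : ℝ) : ℂ) := by
  rw [F11, ← (hasSum_intervalIntegral_exp_mul_sq x).tsum_eq, Complex.ofReal_tsum]
  refine tsum_congr fun n => ?_
  rw [poch_half_div_poch_three_halves]
  push_cast
  rw [one_div_mul_eq_div, div_div]

lemma F01_half {w : ℝ} (hw : 0 ≤ w) : F01 (1 / 2) w = ((Real.cosh (2 * √w) : ℝ) : ℂ) := by
  rw [F01, Real.cosh_eq_tsum, Complex.ofReal_tsum]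
  refine tsum_congr fun k => ?_
  have hpow : (2 * √w) ^ (2 * k) = 4 ^ k * w ^ k := by
    rw [pow_mul, mul_pow, Real.sq_sqrt hw, ← mul_pow]
    norm_num
  have hpoch : poch (1 / 2) k ≠ 0 := poch_ne_zero (by norm_num) k
  rw [hpow]
  push_cast
  rw [← poch_half_mul_factorial_mul_four_pow]
  field_simp

noncomputable def gaussianPrimitive (r : ℝ) : ℝ := ∫ s in (0:ℝ)..r, rexp (-s ^ 2)

lemma integrable_exp_neg_sq : Integrable fun s : ℝ => rexp (-s ^ 2) := by
  simpa using integrable_exp_neg_mul_sq one_pos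

lemma integral_exp_neg_sq : ∫ s : ℝ, rexp (-s ^ 2) = √π := by
  simpa using integral_gaussian 1

lemma continuous_gaussianPrimitive : Continuous gaussianPrimitive :=
  intervalIntegral.continuous_primitive
    (fun a b => (by fun_prop : Continuous fun s : ℝ => rexp (-s ^ 2)).intervalIntegrable a b) 0

lemma abs_gaussianPrimitive_le (r : ℝ) : |gaussianPrimitive r| ≤ √π :=
  calc |gaussianPrimitive r| = ‖∫ s in Ι 0 r, rexp (-s ^ 2)‖ :=
        intervalIntegral.norm_integral_eq_norm_integral_uIoc (fun s => rexp (-s ^ 2))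
    _ ≤ ∫ s in Ι 0 r, ‖rexp (-s ^ 2)‖ := norm_integral_le_integral_norm _
    _ ≤ ∫ s, rexp (-s ^ 2) := by
        simp only [Real.norm_eq_abs, abs_of_pos (exp_pos _)]
        exact setIntegral_le_integral integrable_exp_neg_sq (ae_of_all _ fun s => (exp_pos _).le)
    _ = √π := integral_exp_neg_sq

lemma mul_intervalIntegral_exp_neg_sq_mul_sq (r : ℝ) :
    r * ∫ t in (0:ℝ)..1, rexp (-r ^ 2 * t ^ 2) = gaussianPrimitive r := by
  have h := intervalIntegral.mul_integral_comp_mul_right (f := fun s => rexp (-s ^ 2))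
    (a := 0) (b := 1) r
  simp only [zero_mul, one_mul] at h
  rw [gaussianPrimitive, ← h]
  simp only [mul_pow, neg_mul, mul_comm (r ^ 2)]

section GaussianSmoothing

variable {g : ℝ → ℝ} {M : ℝ}

lemma integrable_mul_exp_neg_sq_div (hg : AEStronglyMeasurable g) (hM : ∀ r, |g r| ≤ M)
    (c : ℝ) {z : ℝ} (hz : 0 < z) : Integrable fun r => g r * rexp (-((r - c) ^ 2 / z)) := by
  have hK : Integrable fun r => rexp (-((r - c) ^ 2 / z)) := by
    refine ((integrable_exp_neg_mul_sq (inv_pos.2 hz)).comp_sub_right c).congr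
      (ae_of_all _ fun r => ?_)
    simp only [neg_mul, div_eq_inv_mul]
  exact hK.bdd_mul hg (ae_of_all _ hM)

lemma inv_sqrt_mul_integral_mul_exp_neg_sq_div (g : ℝ → ℝ) (c : ℝ) {z : ℝ} (hz : 0 < z) :
    (√z)⁻¹ * ∫ r, g r * rexp (-((r - c) ^ 2 / z)) = ∫ s, g (√z * s + c) * rexp (-s ^ 2) := by
  have hsz : 0 < √z := sqrt_pos.2 hz
  have hscale := Measure.integral_comp_mul_left
    (fun x => g (x + c) * rexp (-((x + c - c) ^ 2 / z))) √z
  rw [integral_add_right_eq_self (fun r => g r * rexp (-((r - c) ^ 2 / z))) c,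
    abs_of_pos (inv_pos.2 hsz), smul_eq_mul] at hscale
  rw [← hscale]
  refine integral_congr_ae (ae_of_all _ fun s => ?_)
  simp only [add_sub_cancel_right, mul_pow, sq_sqrt hz.le]
  rw [mul_div_cancel_left₀ _ hz.ne']

lemma tendsto_inv_sqrt_mul_integral_mul_exp_neg_sq_div (hg : Measurable g)
    (hM : ∀ r, |g r| ≤ M) {c : ℝ} (hc : ContinuousAt g c) :
    Tendsto (fun z => (√z)⁻¹ * ∫ r, g r * rexp (-((r - c) ^ 2 / z))) (𝓝[>] 0)
      (𝓝 (√π * g c)) := by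
  have hlim : ∫ s, g c * rexp (-s ^ 2) = √π * g c := by
    rw [integral_const_mul, integral_exp_neg_sq, mul_comm]
  rw [← hlim]
  refine Tendsto.congr' (eventually_nhdsWithin_of_forall fun z hz =>
    (inv_sqrt_mul_integral_mul_exp_neg_sq_div g c hz).symm) ?_
  have hsqrt : Tendsto (fun z : ℝ => √z) (𝓝[>] 0) (𝓝 0) := by
    simpa using (continuous_sqrt.tendsto 0).mono_left nhdsWithin_le_nhds
  refine tendsto_integral_filter_of_dominated_convergence (fun s => M * rexp (-s ^ 2))
    (Eventually.of_forall fun z => by fun_prop) (Eventually.of_forall fun z =>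
      ae_of_all _ fun s => ?_) (integrable_exp_neg_sq.const_mul M) (ae_of_all _ fun s => ?_)
  · rw [norm_mul, Real.norm_eq_abs, Real.norm_eq_abs, abs_of_pos (exp_pos _)]
    exact mul_le_mul_of_nonneg_right (hM _) (exp_pos _).le
  · have h := (hsqrt.mul_const s).add_const c
    rw [zero_mul, zero_add] at h
    exact ((hc.tendsto.comp h).mul_const _)

end GaussianSmoothing

lemma tendsto_inv_sqrt_mul_setIntegral_gaussianPrimitive {c : ℝ} (hc : 0 < c) :
    Tendsto (fun z => (√z)⁻¹ * ∫ r in Ioi 0,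
        gaussianPrimitive r * (rexp (-((r - c) ^ 2 / z)) + rexp (-((r + c) ^ 2 / z))))
      (𝓝[>] 0) (𝓝 (√π * gaussianPrimitive c)) := by
  set g := (Ioi (0:ℝ)).indicator gaussianPrimitive
  have hmeas : Measurable g := continuous_gaussianPrimitive.measurable.indicator measurableSet_Ioi
  have hbdd (r : ℝ) : |g r| ≤ √π :=
    (norm_indicator_le_norm_self gaussianPrimitive r).trans (abs_gaussianPrimitive_le r)
  have hgc : g c = gaussianPrimitive c := indicator_of_mem (mem_Ioi.2 hc) _
  have hg_neg : g (-c) = 0 := indicator_of_notMem (by simpa using hc.le) _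
  have hcont_pos : ContinuousAt g c := by
    refine continuous_gaussianPrimitive.continuousAt.congr ?_
    filter_upwards [Ioi_mem_nhds hc] with r hr using (indicator_of_mem hr _).symm
  have hcont_neg : ContinuousAt g (-c) := by
    refine (continuousAt_const : ContinuousAt (fun _ => (0:ℝ)) (-c)).congr ?_
    filter_upwards [Iio_mem_nhds (neg_neg_of_pos hc)] with r hr
    exact (indicator_of_notMem (fun h : 0 < r => by linarith [mem_Iio.1 hr]) _).symm
  have h := (tendsto_inv_sqrt_mul_integral_mul_exp_neg_sq_div hmeas hbdd hcont_pos).add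
    (tendsto_inv_sqrt_mul_integral_mul_exp_neg_sq_div hmeas hbdd hcont_neg)
  rw [hgc, hg_neg, mul_zero, add_zero] at h
  refine h.congr' (eventually_nhdsWithin_of_forall fun z hz => ?_)
  have hint (c' : ℝ) := integrable_mul_exp_neg_sq_div hmeas.aestronglyMeasurable hbdd c' hz
  simp only [sub_neg_eq_add]
  rw [← mul_add, ← integral_add (hint c) (by simpa using hint (-c)),
    ← integral_indicator measurableSet_Ioi]
  refine congrArg _ (integral_congr_ae (ae_of_all _ fun r => ?_))
  by_cases hr : r ∈ Ioi (0:ℝ)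
  · simp only [g, indicator_of_mem hr]
    ring
  · simp only [g, indicator_of_notMem hr]
    ring

lemma Psi1_eq_integral_cosh {y : ℝ} (hy : 0 ≤ y) (z : ℝ) :
    Psi1 1 (1 / 2) (3 / 2) (1 / 2) (-(z : ℂ)) y = ((∫ u in Ioi 0, rexp (-u) *
      (∫ t in (0:ℝ)..1, rexp (-(z * u) * t ^ 2)) * Real.cosh (2 * √(y * u)) : ℝ) : ℂ) := by
  rw [Psi1, Complex.Gamma_one, inv_one, one_mul, ← integral_complex_ofReal]
  refine setIntegral_congr_fun measurableSet_Ioi fun u hu => ?_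
  rw [sub_self, cpow_zero, one_mul, show -(z : ℂ) * u = ((-(z * u) : ℝ) : ℂ) by simp,
    ← ofReal_mul, F11_half_three_halves, F01_half (mul_nonneg hy (le_of_lt hu))]
  push_cast
  rfl

lemma integral_Ioi_eq_integral_comp_sq_div {z : ℝ} (hz : 0 < z) (f : ℝ → ℝ) :
    ∫ u in Ioi 0, f u = ∫ r in Ioi 0, 2 * r / z * f (r ^ 2 / z) := by
  have hscale := integral_comp_mul_left_Ioi' f 0 (inv_pos.2 hz)
  rw [mul_zero] at hscale
  rw [← hscale, ← integral_comp_rpow_Ioi_of_pos (g := fun v => f (z⁻¹ * v)) two_pos, smul_eq_mul,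
    ← integral_const_mul]
  refine setIntegral_congr_fun measurableSet_Ioi fun r _ => ?_
  norm_num [rpow_two, inv_mul_eq_div]
  ring

lemma exp_mul_sqrt_mul_integral_eq {c z : ℝ} (hc : 0 ≤ c) (hz : 0 < z) :
    rexp (-(c ^ 2 / z)) * √z * ∫ u in Ioi 0, rexp (-u) *
      (∫ t in (0:ℝ)..1, rexp (-(z * u) * t ^ 2)) * Real.cosh (2 * √(c ^ 2 / z * u)) =
    (√z)⁻¹ * ∫ r in Ioi 0,
      gaussianPrimitive r * (rexp (-((r - c) ^ 2 / z)) + rexp (-((r + c) ^ 2 / z))) := by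
  rw [integral_Ioi_eq_integral_comp_sq_div hz, ← integral_const_mul, ← integral_const_mul]
  refine setIntegral_congr_fun measurableSet_Ioi fun r hr => ?_
  have hzr : z * (r ^ 2 / z) = r ^ 2 := by field_simp
  have hsqrt : √(c ^ 2 / z * (r ^ 2 / z)) = c * r / z := by
    rw [show c ^ 2 / z * (r ^ 2 / z) = (c * r / z) ^ 2 by ring,
      sqrt_sq (div_nonneg (mul_nonneg hc (le_of_lt hr)) hz.le)]
  have hminus : rexp (-(c ^ 2 / z)) * rexp (-(r ^ 2 / z)) * rexp (2 * (c * r / z)) =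
      rexp (-((r - c) ^ 2 / z)) := by
    rw [← Real.exp_add, ← Real.exp_add]
    congr 1
    field_simp
    ring
  have hplus : rexp (-(c ^ 2 / z)) * rexp (-(r ^ 2 / z)) * rexp (-(2 * (c * r / z))) =
      rexp (-((r + c) ^ 2 / z)) := by
    rw [← Real.exp_add, ← Real.exp_add]
    congr 1
    field_simp
    ring
  have hinv : (√z)⁻¹ = √z / z := by
    rw [eq_div_iff hz.ne', inv_mul_eq_div, div_eq_iff (sqrt_pos.2 hz).ne', mul_self_sqrt hz.le]
  rw [hzr, hsqrt, ← mul_intervalIntegral_exp_neg_sq_mul_sq, Real.cosh_eq, ← hminus, ← hplus,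
    hinv, mul_div_assoc]
  ring

/-- Henkel's conjectured limit:
`lim_{z→0⁺} e^{−ξ²/(2z)} z^{1/2} Ψ₁[1,1/2;3/2,1/2;−z,ξ²/(2z)] = (π/2) erf(ξ/√2)`. -/
theorem henkel_limit (ξ : ℝ) (hξ : 0 < ξ) :
    Tendsto (fun z : ℝ =>
        Complex.exp (-((ξ ^ 2 / (2 * z) : ℝ) : ℂ)) * (Real.sqrt z : ℂ) *
          Psi1 1 (1 / 2) (3 / 2) (1 / 2) (-(z : ℂ)) ((ξ ^ 2 / (2 * z) : ℝ) : ℂ))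
      (nhdsWithin 0 (Set.Ioi 0))
      (nhds ((Real.pi / 2 * erf (ξ / Real.sqrt 2) : ℝ) : ℂ)) := by
  set c := ξ / √2
  have hc : 0 < c := by positivity
  have hy (z : ℝ) : ξ ^ 2 / (2 * z) = c ^ 2 / z := by
    rw [div_pow, sq_sqrt zero_le_two]
    ring
  have herf : π / 2 * erf c = √π * gaussianPrimitive c := by
    rw [erf, ← gaussianPrimitive]
    field_simp
    rw [sq_sqrt pi_pos.le]
  rw [herf]
  refine ((continuous_ofReal.tendsto _).comp
    (tendsto_inv_sqrt_mul_setIntegral_gaussianPrimitive hc)).congr'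
    (eventually_nhdsWithin_of_forall fun z hz => ?_)
  dsimp only [Function.comp_apply]
  rw [hy, Psi1_eq_integral_cosh (div_nonneg (sq_nonneg c) (le_of_lt hz)), ← ofReal_neg,
    ← ofReal_exp, ← ofReal_mul, ← ofReal_mul, exp_mul_sqrt_mul_integral_eq hc.le hz]
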